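/- Let 0<α<1 and a<b be reals. Let f:[a,b]→ℝ be continuously differentiable with f(a)=f(b)=0, and let g:[a,b]→ℝ be continuous and such that the right Riemann–Liouville derivative D_{b−}^α g and the left Riemann–Liouville derivative D_{a+}^α g exist and are continuous on [a,b]. Then ∫_a^b g(x)·(^C D_{a+}^α f)(x) dx = ∫_a^b f(x)·(D_{b−}^α g)(x) dx, and ∫_a^b g(x)·(^C D_{b−}^α f)(x) dx = ∫_a^b f(x)·(D_{a+}^α g)(x) dx. -/
import Mathlib


open MeasureTheory Set

section Aux
open Real

lemma measurable_rpow_const' (c : ℝ) : Measurable fun x : ℝ => x ^ c := by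
  have h : ∀ x : ℝ, x ^ c =
      if x = 0 then (if c = 0 then 1 else 0)
      else Real.exp (Real.log x * c) * (if x < 0 then Real.cos (c * Real.pi) else 1) := by
    intro x
    rcases lt_trichotomy x 0 with hx | hx | hx
    · rw [Real.rpow_def_of_neg hx]
      simp [hx.ne, hx]
    · subst hx; by_cases hc : c = 0 <;> simp [hc, Real.zero_rpow]
    · rw [Real.rpow_def_of_pos hx]
      simp [hx.ne', not_lt.mpr hx.le]
  simp only [h]
  refine Measurable.ite (measurableSet_eq_fun measurable_id measurable_const) measurable_const ?_
  exact ((Real.measurable_log.mul measurable_const).exp).mul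
    (Measurable.ite (measurableSet_lt measurable_id measurable_const) measurable_const
      measurable_const)

lemma ker_ii_left {α : ℝ} (hα1 : α < 1) (x c : ℝ) :
    IntervalIntegrable (fun t => (x - t) ^ (-α)) volume c x := by
  have h := (intervalIntegral.intervalIntegrable_rpow' (a := x - c) (b := x - x)
    (r := -α) (by linarith)).comp_sub_left x
  simpa using h

lemma ker_ii_right {α : ℝ} (hα1 : α < 1) (x c : ℝ) :
    IntervalIntegrable (fun t => (t - x) ^ (-α)) volume x c := by
  have h := (intervalIntegral.intervalIntegrable_rpow' (a := x - x) (b := c - x)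
    (r := -α) (by linarith)).comp_sub_right x
  simpa using h

lemma ker_int {α a x : ℝ} (hα0 : 0 < α) (hα1 : α < 1) :
    ∫ t in a..x, (x - t) ^ (-α) = (x - a) ^ (1 - α) / (1 - α) := by
  have h := intervalIntegral.integral_comp_sub_left (a := a) (b := x)
    (fun s : ℝ => s ^ (-α)) x
  rw [h, sub_self, integral_rpow (Or.inl (by linarith))]
  rw [Real.zero_rpow (by intro h; apply hα1.ne'; linarith)]
  rw [show -α + 1 = 1 - α from by ring]
  norm_num

lemma fubini_triangle {α a b : ℝ} (hα0 : 0 < α) (hα1 : α < 1) (hab : a ≤ b)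
    (u v : ℝ → ℝ) (hu : Continuous u) (hv : Continuous v) :
    (∫ x in a..b, u x * ∫ t in a..x, (x - t) ^ (-α) * v t) =
    ∫ t in a..b, v t * ∫ x in t..b, (x - t) ^ (-α) * u x := by
  set μ := volume.restrict (Ioc a b) with hμ
  haveI : IsFiniteMeasure μ := by
    constructor
    rw [hμ, Measure.restrict_apply_univ, Real.volume_Ioc]
    exact ENNReal.ofReal_lt_top
  set F : ℝ × ℝ → ℝ :=
    fun p => if p.2 ≤ p.1 then (p.1 - p.2) ^ (-α) * (u p.1 * v p.2) else 0 with hF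
  obtain ⟨Mu, hMu⟩ := (isCompact_Icc (a := a) (b := b)).exists_bound_of_continuousOn
    hu.continuousOn
  obtain ⟨Mv, hMv⟩ := (isCompact_Icc (a := a) (b := b)).exists_bound_of_continuousOn
    hv.continuousOn
  set M : ℝ := |Mu| * |Mv| with hM
  have hMnn : 0 ≤ M := mul_nonneg (abs_nonneg _) (abs_nonneg _)
  have hFm : Measurable F := by
    refine Measurable.ite (measurableSet_le measurable_snd measurable_fst) ?_ measurable_const
    exact (((measurable_rpow_const' (-α)).comp (measurable_fst.sub measurable_snd)).mul
        ((hu.measurable.comp measurable_fst).mul (hv.measurable.comp measurable_snd)))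
  have hEq1 : ∀ x, x ≤ b → EqOn (fun t => F (x, t))
      ((Ioc a x).indicator (fun t => (x - t) ^ (-α) * (u x * v t))) (Ioc a b) := by
    intro x hxb t ht
    by_cases h : t ≤ x
    · have hm : t ∈ Ioc a x := ⟨ht.1, h⟩
      simp [hF, h, Set.indicator_of_mem hm]
    · have hm : t ∉ Ioc a x := fun hc => h hc.2
      simp [hF, h, Set.indicator_of_notMem hm]
  have hslice : ∀ x ∈ Ioc a b, Integrable (fun t => F (x, t)) μ := by
    intro x hx
    have h1 : IntervalIntegrable (fun t => (x - t) ^ (-α) * (u x * v t)) volume a x :=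
      (ker_ii_left hα1 x a).mul_continuousOn ((continuous_const.mul hv).continuousOn)
    have h2 : IntegrableOn (fun t => (x - t) ^ (-α) * (u x * v t)) (Ioc a x) volume :=
      (intervalIntegrable_iff_integrableOn_Ioc_of_le hx.1.le).mp h1
    have h3 := (h2.integrable_indicator measurableSet_Ioc).restrict (s := Ioc a b)
    exact h3.congr ((ae_restrict_iff' measurableSet_Ioc).mpr
      (ae_of_all _ fun t ht => ((hEq1 x hx.2) ht).symm))
  have hbound : ∀ x ∈ Ioc a b,
      (∫ t, ‖F (x, t)‖ ∂μ) ≤ M * ((b - a) ^ (1 - α) / (1 - α)) := by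
    intro x hx
    have hIoc : Ioc a x ⊆ Ioc a b := Ioc_subset_Ioc_right hx.2
    have hker : IntervalIntegrable (fun t => (x - t) ^ (-α) * M) volume a x :=
      (ker_ii_left hα1 x a).mul_continuousOn continuousOn_const
    have hkerOn : IntegrableOn (fun t => (x - t) ^ (-α) * M) (Ioc a x) volume :=
      (intervalIntegrable_iff_integrableOn_Ioc_of_le hx.1.le).mp hker
    have hind := (hkerOn.integrable_indicator (measurableSet_Ioc (a := a) (b := x))).restrict
      (s := Ioc a b)
    have step1 : (∫ t, ‖F (x, t)‖ ∂μ)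
        ≤ ∫ t in Ioc a b, (Ioc a x).indicator (fun t => (x - t) ^ (-α) * M) t := by
      refine setIntegral_mono_on ((hslice x hx).norm) ?_ measurableSet_Ioc ?_
      · exact hind
      intro t ht
      rw [show F (x, t) = _ from hEq1 x hx.2 ht]
      by_cases h : t ∈ Ioc a x
      · rw [Set.indicator_of_mem h, Set.indicator_of_mem h, Real.norm_eq_abs, abs_mul]
        have hknn : (0:ℝ) ≤ (x - t) ^ (-α) := Real.rpow_nonneg (sub_nonneg.mpr h.2) _
        rw [abs_of_nonneg hknn]
        refine mul_le_mul_of_nonneg_left ?_ hknn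
        rw [abs_mul]
        have hxI : x ∈ Icc a b := ⟨hx.1.le, hx.2⟩
        have htI : t ∈ Icc a b := ⟨h.1.le, le_trans h.2 hx.2⟩
        exact mul_le_mul ((hMu x hxI).trans (le_abs_self Mu))
          ((hMv t htI).trans (le_abs_self Mv)) (abs_nonneg _) (abs_nonneg _)
      · rw [Set.indicator_of_notMem h, Set.indicator_of_notMem h]; simp
    have step2 : (∫ t in Ioc a b, (Ioc a x).indicator (fun t => (x - t) ^ (-α) * M) t)
        = ((x - a) ^ (1 - α) / (1 - α)) * M := by
      rw [setIntegral_indicator measurableSet_Ioc,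
        Set.inter_eq_self_of_subset_right hIoc,
        ← intervalIntegral.integral_of_le hx.1.le,
        intervalIntegral.integral_mul_const, ker_int hα0 hα1]
    refine le_trans step1 ?_
    rw [step2, mul_comm M]
    refine mul_le_mul_of_nonneg_right ?_ hMnn
    have h1α : (0:ℝ) < 1 - α := by linarith
    rw [div_le_div_iff_of_pos_right h1α]
    exact Real.rpow_le_rpow (sub_nonneg.mpr hx.1.le) (sub_le_sub_right hx.2 a) h1α.le
  have hFint : Integrable (Function.uncurry fun x t => F (x, t)) (μ.prod μ) := by
    rw [show (Function.uncurry fun x t => F (x, t)) = F from rfl]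
    rw [integrable_prod_iff hFm.aestronglyMeasurable]
    constructor
    · filter_upwards [self_mem_ae_restrict measurableSet_Ioc] with x hx
      exact hslice x hx
    · refine Integrable.mono' (integrable_const (M * ((b - a) ^ (1 - α) / (1 - α))))
        (hFm.norm.aestronglyMeasurable.integral_prod_right') ?_
      filter_upwards [self_mem_ae_restrict measurableSet_Ioc] with x hx
      rw [Real.norm_eq_abs, abs_of_nonneg (integral_nonneg fun t => norm_nonneg _)]
      exact hbound x hx
  have hswap : (∫ x, (∫ t, F (x, t) ∂μ) ∂μ) = ∫ t, (∫ x, F (x, t) ∂μ) ∂μ :=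
    integral_integral_swap hFint
  have hL : (∫ x in a..b, u x * ∫ t in a..x, (x - t) ^ (-α) * v t)
      = ∫ x, (∫ t, F (x, t) ∂μ) ∂μ := by
    rw [intervalIntegral.integral_of_le hab, hμ]
    refine setIntegral_congr_fun measurableSet_Ioc fun x hx => ?_
    have hinner : (∫ t, F (x, t) ∂μ) = ∫ t in a..x, (x - t) ^ (-α) * (u x * v t) := by
      rw [hμ, setIntegral_congr_fun measurableSet_Ioc (hEq1 x hx.2),
        setIntegral_indicator measurableSet_Ioc,
        Set.inter_eq_self_of_subset_right (Ioc_subset_Ioc_right hx.2),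
        ← intervalIntegral.integral_of_le hx.1.le]
    show u x * _ = _
    rw [hinner, ← intervalIntegral.integral_const_mul]
    refine intervalIntegral.integral_congr fun t _ => ?_
    ring
  have hEq2 : ∀ t ∈ Ioc a b, EqOn (fun x => F (x, t))
      ((Icc t b).indicator (fun x => (x - t) ^ (-α) * (u x * v t))) (Ioc a b) := by
    intro t ht x hx
    by_cases h : t ≤ x
    · have hm : x ∈ Icc t b := ⟨h, hx.2⟩
      simp [hF, h, Set.indicator_of_mem hm]
    · have hm : x ∉ Icc t b := fun hc => h hc.1
      simp [hF, h, Set.indicator_of_notMem hm]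
  have hR : (∫ t in a..b, v t * ∫ x in t..b, (x - t) ^ (-α) * u x)
      = ∫ t, (∫ x, F (x, t) ∂μ) ∂μ := by
    rw [intervalIntegral.integral_of_le hab, hμ]
    refine setIntegral_congr_fun measurableSet_Ioc fun t ht => ?_
    have hsub : Icc t b ⊆ Ioc a b := fun x hx => ⟨lt_of_lt_of_le ht.1 hx.1, hx.2⟩
    have hinner : (∫ x, F (x, t) ∂μ) = ∫ x in t..b, (x - t) ^ (-α) * (u x * v t) := by
      rw [hμ, setIntegral_congr_fun measurableSet_Ioc (hEq2 t ht),
        setIntegral_indicator measurableSet_Icc,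
        Set.inter_eq_self_of_subset_right hsub,
        integral_Icc_eq_integral_Ioc,
        ← intervalIntegral.integral_of_le ht.2]
    show v t * _ = _
    rw [hinner, ← intervalIntegral.integral_const_mul]
    refine intervalIntegral.integral_congr fun x _ => ?_
    ring
  rw [hL, hswap, ← hR]

end Aux

/-- Left Caputo fractional derivative of order `α` with base point `a`. -/
noncomputable def caputoLeft (a α : ℝ) (f : ℝ → ℝ) (x : ℝ) : ℝ :=
  (1 / Real.Gamma (1 - α)) * ∫ t in a..x, (x - t) ^ (-α) * deriv f t

/-- Right Caputo fractional derivative of order `α` with base point `b`. -/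
noncomputable def caputoRight (b α : ℝ) (f : ℝ → ℝ) (x : ℝ) : ℝ :=
  -((1 / Real.Gamma (1 - α)) * ∫ t in x..b, (t - x) ^ (-α) * deriv f t)

/-- Left Riemann–Liouville fractional integral of order `α` with base point `a`. -/
noncomputable def rlLeftInt (a α : ℝ) (f : ℝ → ℝ) (x : ℝ) : ℝ :=
  (1 / Real.Gamma α) * ∫ t in a..x, (x - t) ^ (α - 1) * f t

/-- Right Riemann–Liouville fractional integral of order `α` with base point `b`. -/
noncomputable def rlRightInt (b α : ℝ) (f : ℝ → ℝ) (x : ℝ) : ℝ :=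
  (1 / Real.Gamma α) * ∫ t in x..b, (t - x) ^ (α - 1) * f t

/-- Left Riemann–Liouville fractional derivative of order `α` with base point `a`. -/
noncomputable def rlLeftDeriv (a α : ℝ) (f : ℝ → ℝ) (x : ℝ) : ℝ :=
  deriv (fun s => (1 / Real.Gamma (1 - α)) * ∫ t in a..s, (s - t) ^ (-α) * f t) x

/-- Right Riemann–Liouville fractional derivative of order `α` with base point `b`. -/
noncomputable def rlRightDeriv (b α : ℝ) (f : ℝ → ℝ) (x : ℝ) : ℝ :=
  -deriv (fun s => (1 / Real.Gamma (1 - α)) * ∫ t in s..b, (t - s) ^ (-α) * f t) x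

/-- `f` is continuously differentiable on `[a,b]`. -/
def C1On (f : ℝ → ℝ) (a b : ℝ) : Prop :=
  (∀ x ∈ Set.Icc a b, DifferentiableAt ℝ f x) ∧ ContinuousOn (deriv f) (Set.Icc a b)

/-- The left Riemann–Liouville derivative of `g` of order `α` with base point `c`
exists and is continuous on the set `s`. -/
def HasContRlLeftDeriv (c α : ℝ) (g : ℝ → ℝ) (s : Set ℝ) : Prop :=
  (∀ x ∈ s, DifferentiableAt ℝ
      (fun u => (1 / Real.Gamma (1 - α)) * ∫ t in c..u, (u - t) ^ (-α) * g t) x) ∧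
  ContinuousOn (rlLeftDeriv c α g) s

/-- The right Riemann–Liouville derivative of `g` of order `α` with base point `c`
exists and is continuous on the set `s`. -/
def HasContRlRightDeriv (c α : ℝ) (g : ℝ → ℝ) (s : Set ℝ) : Prop :=
  (∀ x ∈ s, DifferentiableAt ℝ
      (fun u => (1 / Real.Gamma (1 - α)) * ∫ t in u..c, (t - u) ^ (-α) * g t) x) ∧
  ContinuousOn (rlRightDeriv c α g) s

theorem part1
    (α a b : ℝ) (hα0 : 0 < α) (hα1 : α < 1) (hab : a < b)
    (f g : ℝ → ℝ) (hf : C1On f a b) (hfa : f a = 0) (hfb : f b = 0)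
    (hg : ContinuousOn g (Set.Icc a b))
    (hgDr : HasContRlRightDeriv b α g (Set.Icc a b)) :
    ∫ x in a..b, g x * caputoLeft a α f x = ∫ x in a..b, f x * rlRightDeriv b α g x := by
  obtain ⟨hfd, hfd'⟩ := hf
  obtain ⟨hgDr1, hgDr2⟩ := hgDr
  have hclamp : Continuous fun x : ℝ => max a (min x b) :=
    continuous_const.max (continuous_id.min continuous_const)
  have hmem : ∀ x : ℝ, max a (min x b) ∈ Icc a b := fun x =>
    ⟨le_max_left _ _, max_le hab.le (min_le_right _ _)⟩
  set G : ℝ → ℝ := fun x => g (max a (min x b)) with hGdef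
  have hGc : Continuous G := hg.comp_continuous hclamp hmem
  have hGeq : ∀ x ∈ Icc a b, G x = g x := by
    intro x hx
    simp only [hGdef, min_eq_left hx.2, max_eq_right hx.1]
  set D : ℝ → ℝ := fun x => deriv f (max a (min x b)) with hDdef
  have hDc : Continuous D := hfd'.comp_continuous hclamp hmem
  have hDeq : ∀ x ∈ Icc a b, D x = deriv f x := by
    intro x hx
    simp only [hDdef, min_eq_left hx.2, max_eq_right hx.1]
  set Φ : ℝ → ℝ := fun u => 1 / Real.Gamma (1 - α) * ∫ t in u..b, (t - u) ^ (-α) * g t with hΦ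
  have hΦcont : ContinuousOn Φ (Icc a b) := fun x hx =>
    ((hgDr1 x hx).continuousAt).continuousWithinAt
  have key1 : (∫ x in a..b, g x * caputoLeft a α f x) = ∫ t in a..b, deriv f t * Φ t := by
    calc (∫ x in a..b, g x * caputoLeft a α f x)
        = ∫ x in a..b, 1 / Real.Gamma (1 - α)
            * (G x * ∫ t in a..x, (x - t) ^ (-α) * D t) := by
          refine intervalIntegral.integral_congr fun x hx => ?_
          rw [uIcc_of_le hab.le] at hx
          have hin : (∫ t in a..x, (x - t) ^ (-α) * deriv f t)
              = ∫ t in a..x, (x - t) ^ (-α) * D t := by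
            refine intervalIntegral.integral_congr fun t ht => ?_
            rw [uIcc_of_le hx.1] at ht
            rw [hDeq t ⟨ht.1, le_trans ht.2 hx.2⟩]
          simp only [caputoLeft]
          rw [hin, hGeq x hx]
          ring
      _ = 1 / Real.Gamma (1 - α)
            * ∫ x in a..b, G x * ∫ t in a..x, (x - t) ^ (-α) * D t :=
          intervalIntegral.integral_const_mul _ _
      _ = 1 / Real.Gamma (1 - α)
            * ∫ t in a..b, D t * ∫ x in t..b, (x - t) ^ (-α) * G x := by
          rw [fubini_triangle hα0 hα1 hab.le G D hGc hDc]
      _ = ∫ t in a..b, deriv f t * Φ t := by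
          rw [← intervalIntegral.integral_const_mul]
          refine intervalIntegral.integral_congr fun t ht => ?_
          rw [uIcc_of_le hab.le] at ht
          have hin : (∫ x in t..b, (x - t) ^ (-α) * G x)
              = ∫ x in t..b, (x - t) ^ (-α) * g x := by
            refine intervalIntegral.integral_congr fun x hx => ?_
            rw [uIcc_of_le ht.2] at hx
            rw [hGeq x ⟨le_trans ht.1 hx.1, hx.2⟩]
          rw [hin, hDeq t ht, hΦ]
          ring
  have huIcc : uIcc a b = Icc a b := uIcc_of_le hab.le
  have hU : ∀ x ∈ uIcc a b, HasDerivAt f (deriv f x) x := fun x hx =>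
    (hfd x (huIcc ▸ hx)).hasDerivAt
  have hV : ∀ x ∈ uIcc a b, HasDerivAt Φ (-(rlRightDeriv b α g x)) x := by
    intro x hx
    have h := (hgDr1 x (huIcc ▸ hx)).hasDerivAt
    have e : -(rlRightDeriv b α g x) = deriv Φ x := by
      simp only [rlRightDeriv, neg_neg, hΦ]
    rw [e]
    exact h
  have hAint : IntervalIntegrable (fun x => deriv f x * Φ x) volume a b := by
    apply ContinuousOn.intervalIntegrable
    rw [huIcc]
    exact hfd'.mul hΦcont
  have hfc : ContinuousOn f (Icc a b) := fun x hx => (hfd x hx).continuousAt.continuousWithinAt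
  have hBint : IntervalIntegrable (fun x => f x * rlRightDeriv b α g x) volume a b := by
    apply ContinuousOn.intervalIntegrable
    rw [huIcc]
    exact hfc.mul hgDr2
  have hIBP := intervalIntegral.integral_deriv_mul_eq_sub hU hV
    (by apply ContinuousOn.intervalIntegrable; rw [huIcc]; exact hfd')
    (by apply ContinuousOn.intervalIntegrable; rw [huIcc]; exact hgDr2.neg)
  simp only [mul_neg, ← sub_eq_add_neg] at hIBP
  rw [intervalIntegral.integral_sub hAint hBint, hfa, hfb, zero_mul, zero_mul, sub_zero] at hIBP
  rw [key1]
  exact sub_eq_zero.mp hIBP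

theorem part2
    (α a b : ℝ) (hα0 : 0 < α) (hα1 : α < 1) (hab : a < b)
    (f g : ℝ → ℝ) (hf : C1On f a b) (hfa : f a = 0) (hfb : f b = 0)
    (hg : ContinuousOn g (Set.Icc a b))
    (hgDl : HasContRlLeftDeriv a α g (Set.Icc a b)) :
    ∫ x in a..b, g x * caputoRight b α f x = ∫ x in a..b, f x * rlLeftDeriv a α g x := by
  obtain ⟨hfd, hfd'⟩ := hf
  obtain ⟨hgDl1, hgDl2⟩ := hgDl
  have hclamp : Continuous fun x : ℝ => max a (min x b) :=
    continuous_const.max (continuous_id.min continuous_const)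
  have hmem : ∀ x : ℝ, max a (min x b) ∈ Icc a b := fun x =>
    ⟨le_max_left _ _, max_le hab.le (min_le_right _ _)⟩
  set G : ℝ → ℝ := fun x => g (max a (min x b)) with hGdef
  have hGc : Continuous G := hg.comp_continuous hclamp hmem
  have hGeq : ∀ x ∈ Icc a b, G x = g x := by
    intro x hx
    simp only [hGdef, min_eq_left hx.2, max_eq_right hx.1]
  set D : ℝ → ℝ := fun x => deriv f (max a (min x b)) with hDdef
  have hDc : Continuous D := hfd'.comp_continuous hclamp hmem
  have hDeq : ∀ x ∈ Icc a b, D x = deriv f x := by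
    intro x hx
    simp only [hDdef, min_eq_left hx.2, max_eq_right hx.1]
  set Ψ : ℝ → ℝ := fun u => 1 / Real.Gamma (1 - α) * ∫ t in a..u, (u - t) ^ (-α) * g t with hΨ
  have hΨcont : ContinuousOn Ψ (Icc a b) := fun x hx =>
    ((hgDl1 x hx).continuousAt).continuousWithinAt
  have key2 : (∫ x in a..b, g x * caputoRight b α f x) = -∫ t in a..b, deriv f t * Ψ t := by
    calc (∫ x in a..b, g x * caputoRight b α f x)
        = ∫ x in a..b, (-(1 / Real.Gamma (1 - α)))
            * (G x * ∫ t in x..b, (t - x) ^ (-α) * D t) := by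
          refine intervalIntegral.integral_congr fun x hx => ?_
          rw [uIcc_of_le hab.le] at hx
          have hin : (∫ t in x..b, (t - x) ^ (-α) * deriv f t)
              = ∫ t in x..b, (t - x) ^ (-α) * D t := by
            refine intervalIntegral.integral_congr fun t ht => ?_
            rw [uIcc_of_le hx.2] at ht
            rw [hDeq t ⟨le_trans hx.1 ht.1, ht.2⟩]
          simp only [caputoRight]
          rw [hin, hGeq x hx]
          ring
      _ = (-(1 / Real.Gamma (1 - α)))
            * ∫ x in a..b, G x * ∫ t in x..b, (t - x) ^ (-α) * D t :=
          intervalIntegral.integral_const_mul _ _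
      _ = (-(1 / Real.Gamma (1 - α)))
            * ∫ x in a..b, D x * ∫ t in a..x, (x - t) ^ (-α) * G t := by
          rw [← fubini_triangle hα0 hα1 hab.le D G hDc hGc]
      _ = -(1 / Real.Gamma (1 - α)
            * ∫ x in a..b, D x * ∫ t in a..x, (x - t) ^ (-α) * G t) := by
          rw [neg_mul]
      _ = -∫ t in a..b, deriv f t * Ψ t := by
          rw [← intervalIntegral.integral_const_mul]
          congr 1
          refine intervalIntegral.integral_congr fun x hx => ?_
          rw [uIcc_of_le hab.le] at hx
          have hin : (∫ t in a..x, (x - t) ^ (-α) * G t)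
              = ∫ t in a..x, (x - t) ^ (-α) * g t := by
            refine intervalIntegral.integral_congr fun t ht => ?_
            rw [uIcc_of_le hx.1] at ht
            rw [hGeq t ⟨ht.1, le_trans ht.2 hx.2⟩]
          rw [hin, hDeq x hx, hΨ]
          ring
  have huIcc : uIcc a b = Icc a b := uIcc_of_le hab.le
  have hU : ∀ x ∈ uIcc a b, HasDerivAt f (deriv f x) x := fun x hx =>
    (hfd x (huIcc ▸ hx)).hasDerivAt
  have hV : ∀ x ∈ uIcc a b, HasDerivAt Ψ (rlLeftDeriv a α g x) x := by
    intro x hx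
    have h := (hgDl1 x (huIcc ▸ hx)).hasDerivAt
    have e : rlLeftDeriv a α g x = deriv Ψ x := by
      simp only [rlLeftDeriv, hΨ]
    rw [e]
    exact h
  have hAint : IntervalIntegrable (fun x => deriv f x * Ψ x) volume a b := by
    apply ContinuousOn.intervalIntegrable
    rw [huIcc]
    exact hfd'.mul hΨcont
  have hfc : ContinuousOn f (Icc a b) := fun x hx => (hfd x hx).continuousAt.continuousWithinAt
  have hBint : IntervalIntegrable (fun x => f x * rlLeftDeriv a α g x) volume a b := by
    apply ContinuousOn.intervalIntegrable
    rw [huIcc]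
    exact hfc.mul hgDl2
  have hIBP := intervalIntegral.integral_deriv_mul_eq_sub hU hV
    (by apply ContinuousOn.intervalIntegrable; rw [huIcc]; exact hfd')
    (by apply ContinuousOn.intervalIntegrable; rw [huIcc]; exact hgDl2)
  rw [intervalIntegral.integral_add hAint hBint, hfa, hfb, zero_mul, zero_mul, sub_zero] at hIBP
  rw [key2]
  linarith [hIBP]

/-- Integration by parts for Caputo derivatives when `f(a) = f(b) = 0`:
the boundary terms vanish. -/
theorem caputo_integration_by_parts_vanishing_boundary
    (α a b : ℝ) (hα0 : 0 < α) (hα1 : α < 1) (hab : a < b)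
    (f g : ℝ → ℝ) (hf : C1On f a b) (hfa : f a = 0) (hfb : f b = 0)
    (hg : ContinuousOn g (Set.Icc a b))
    (hgDr : HasContRlRightDeriv b α g (Set.Icc a b))
    (hgDl : HasContRlLeftDeriv a α g (Set.Icc a b)) :
    (∫ x in a..b, g x * caputoLeft a α f x = ∫ x in a..b, f x * rlRightDeriv b α g x) ∧
    (∫ x in a..b, g x * caputoRight b α f x = ∫ x in a..b, f x * rlLeftDeriv a α g x) := by
  exact ⟨part1 α a b hα0 hα1 hab f g hf hfa hfb hg hgDr,
    part2 α a b hα0 hα1 hab f g hf hfa hfb hg hgDl⟩
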